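/- arXiv:0710.1499 — 7 statements merged into one kernel-verified Lean document; each statement's English description precedes it below -/
import Mathlib

section
/- Let Δ be an upper bound with |V_i| ≤ Δ for all i ∈ I. Then every feasible vector x* satisfies the pointwise bound x*_v ≤ Δ · x_v for all v ∈ V, where x is the safe solution. -/
/-- If `|Vi i| ≤ Δ` for all resources `i`, then every feasible vector `xs` satisfies the
pointwise bound `xs v ≤ Δ * x v`, where `x` is the safe solution. -/
theorem safe_solution_pointwise_bound {V I : Type*} [Fintype V] [Fintype I]
    (a : I → V → ℝ) (ha : ∀ i v, 0 ≤ a i v)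
    (Vi : I → Finset V) (hVi : ∀ i v, v ∈ Vi i ↔ 0 < a i v)
    (Iv : V → Finset I) (hIv : ∀ v i, i ∈ Iv v ↔ 0 < a i v)
    (hVine : ∀ i, (Vi i).Nonempty) (hIvne : ∀ v, (Iv v).Nonempty)
    (x : V → ℝ)
    (hx : ∀ v, x v = (Iv v).inf' (hIvne v) (fun i => 1 / (a i v * ((Vi i).card : ℝ))))
    (Δ : ℕ) (hΔ : ∀ i, (Vi i).card ≤ Δ)
    (xs : V → ℝ) (hxs0 : ∀ v, 0 ≤ xs v)
    (hxsfeas : ∀ i, ∑ v ∈ Vi i, a i v * xs v ≤ 1) :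
    ∀ v : V, xs v ≤ (Δ : ℝ) * x v := by
  intro v
  obtain ⟨i, hi, hieq⟩ := Finset.exists_mem_eq_inf' (hIvne v)
    (fun i => 1 / (a i v * ((Vi i).card : ℝ)))
  have hav : 0 < a i v := (hIv v i).mp hi
  have hcard : 0 < ((Vi i).card : ℝ) := by
    exact_mod_cast Finset.card_pos.mpr (hVine i)
  have hvmem : v ∈ Vi i := (hVi i v).mpr hav
  -- xs v ≤ 1 / a i v
  have hterm : a i v * xs v ≤ 1 := by
    refine le_trans ?_ (hxsfeas i)
    exact Finset.single_le_sum (fun w _ => mul_nonneg (ha i w) (hxs0 w)) hvmem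
  have h1 : xs v ≤ 1 / a i v := by
    rw [le_div_iff₀ hav]; linarith [hterm]
  have hΔi : ((Vi i).card : ℝ) ≤ (Δ : ℝ) := by exact_mod_cast hΔ i
  have hxv : x v = 1 / (a i v * ((Vi i).card : ℝ)) := by rw [hx v, hieq]
  rw [hxv]
  calc xs v ≤ 1 / a i v := h1
    _ = ((Vi i).card : ℝ) * (1 / (a i v * ((Vi i).card : ℝ))) := by
        field_simp
    _ ≤ (Δ : ℝ) * (1 / (a i v * ((Vi i).card : ℝ))) := by
        apply mul_le_mul_of_nonneg_right hΔi
        positivity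
end

section
/- The safe solution achieves approximation ratio Δ for the max-min objective: if |V_i| ≤ Δ for all i ∈ I, then for every feasible vector x*, min_{k∈K} Σ_{v∈V} c_{kv} x*_v ≤ Δ · min_{k∈K} Σ_{v∈V} c_{kv} x_v, where x is the safe solution. -/
/-- The safe solution achieves approximation ratio `Δ` for the max-min objective:
if `|Vi i| ≤ Δ` for all `i`, then for every feasible `xs`,
`min_k ∑ v, c k v * xs v ≤ Δ * min_k ∑ v, c k v * x v`, where `x` is the safe solution. -/
theorem safe_solution_approximation {V I K : Type*} [Fintype V] [Fintype I] [Fintype K]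
    [Nonempty K]
    (a : I → V → ℝ) (ha : ∀ i v, 0 ≤ a i v)
    (c : K → V → ℝ) (hc : ∀ k v, 0 ≤ c k v)
    (Vi : I → Finset V) (hVi : ∀ i v, v ∈ Vi i ↔ 0 < a i v)
    (Iv : V → Finset I) (hIv : ∀ v i, i ∈ Iv v ↔ 0 < a i v)
    (hVine : ∀ i, (Vi i).Nonempty) (hIvne : ∀ v, (Iv v).Nonempty)
    (x : V → ℝ)
    (hx : ∀ v, x v = (Iv v).inf' (hIvne v) (fun i => 1 / (a i v * ((Vi i).card : ℝ))))
    (Δ : ℕ) (hΔ : ∀ i, (Vi i).card ≤ Δ)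
    (xs : V → ℝ) (hxs0 : ∀ v, 0 ≤ xs v)
    (hxsfeas : ∀ i, ∑ v ∈ Vi i, a i v * xs v ≤ 1) :
    Finset.univ.inf' Finset.univ_nonempty (fun k => ∑ v : V, c k v * xs v) ≤
      (Δ : ℝ) * Finset.univ.inf' Finset.univ_nonempty (fun k => ∑ v : V, c k v * x v) := by
  -- Key pointwise bound: xs v ≤ Δ * x v
  have key : ∀ v, xs v ≤ (Δ : ℝ) * x v := by
    intro v
    obtain ⟨i, hi, hxi⟩ := Finset.exists_mem_eq_inf' (hIvne v)
      (fun i => 1 / (a i v * ((Vi i).card : ℝ)))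
    have hav : 0 < a i v := (hIv v i).mp hi
    have hvmem : v ∈ Vi i := (hVi i v).mpr hav
    have hcard : 0 < ((Vi i).card : ℝ) := by
      exact_mod_cast Finset.card_pos.mpr ⟨v, hvmem⟩
    have hcardΔ : ((Vi i).card : ℝ) ≤ (Δ : ℝ) := by exact_mod_cast hΔ i
    have hxs : a i v * xs v ≤ 1 := by
      refine le_trans ?_ (hxsfeas i)
      exact Finset.single_le_sum (fun w _ => mul_nonneg (ha i w) (hxs0 w)) hvmem
    have hxv : x v = 1 / (a i v * ((Vi i).card : ℝ)) := by rw [hx v, hxi]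
    have h1 : xs v ≤ 1 / a i v := by
      rw [le_div_iff₀ hav, mul_comm]; exact hxs
    have h2 : (1 : ℝ) / a i v ≤ (Δ : ℝ) * (1 / (a i v * ((Vi i).card : ℝ))) := by
      rw [mul_one_div, div_le_div_iff₀ hav (by positivity)]
      nlinarith
    rw [hxv]; exact h1.trans h2
  -- Conclude via the minimizer of the RHS
  obtain ⟨k0, _, hk0⟩ := Finset.exists_mem_eq_inf' (Finset.univ_nonempty (α := K))
    (fun k => ∑ v : V, c k v * x v)
  have h1 : Finset.univ.inf' Finset.univ_nonempty (fun k => ∑ v : V, c k v * xs v)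
      ≤ ∑ v : V, c k0 v * xs v :=
    Finset.inf'_le _ (Finset.mem_univ k0)
  have h2 : ∑ v : V, c k0 v * xs v ≤ (Δ : ℝ) * ∑ v : V, c k0 v * x v := by
    rw [Finset.mul_sum]
    refine Finset.sum_le_sum fun v _ => ?_
    calc c k0 v * xs v ≤ c k0 v * ((Δ : ℝ) * x v) :=
          mul_le_mul_of_nonneg_left (key v) (hc k0 v)
      _ = (Δ : ℝ) * (c k0 v * x v) := by ring
  have h3 := h1.trans h2
  rw [← hk0] at h3
  exact h3
end

section
/- Let d, D be positive integers with dD > 1 and let α be a real number with 1 ≤ α < d/2 + 1 − 1/(2D). Then there exists an integer R ≥ 1 such that d^R D^{R−1} / (2α) − (1 − 1/α) · (d^R D^R − dD)/(dD − 1) > 1. -/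
/-- If `1 ≤ α < d/2 + 1 - 1/(2D)` and `dD > 1`, then for a large enough `R ≥ 1`,
`d^R D^(R-1)/(2α) - (1 - 1/α)(d^R D^R - dD)/(dD - 1) > 1`. -/
theorem exists_large_R (d D : ℕ) (hd : 0 < d) (hD : 0 < D) (hdD : 1 < d * D)
    (α : ℝ) (hα1 : 1 ≤ α) (hα2 : α < (d : ℝ) / 2 + 1 - 1 / (2 * D)) :
    ∃ R : ℕ, 1 ≤ R ∧
      1 < (d : ℝ) ^ R * (D : ℝ) ^ (R - 1) / (2 * α) -
        (1 - 1 / α) * (((d : ℝ) ^ R * (D : ℝ) ^ R - (d : ℝ) * D) / ((d : ℝ) * D - 1)) := by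
  have ha : (0:ℝ) < (d:ℝ) := by exact_mod_cast hd
  have hb : (0:ℝ) < (D:ℝ) := by exact_mod_cast hD
  have hP : (1:ℝ) < (d:ℝ) * D := by exact_mod_cast hdD
  have hα0 : (0:ℝ) < α := lt_of_lt_of_le one_pos hα1
  have hPpos : (0:ℝ) < (d:ℝ) * D - 1 := by linarith
  have hnum : 0 < (d:ℝ) * D + 2 * D - 1 - 2 * α * D := by
    have h1 : (1 / (2 * (D:ℝ))) * (2 * D) = 1 := by field_simp
    nlinarith [mul_lt_mul_of_pos_right hα2 (by positivity : (0:ℝ) < 2 * D)]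
  set a : ℝ := (d:ℝ)
  set b : ℝ := (D:ℝ)
  set c : ℝ := a / (2 * α) - (1 - 1 / α) * (a * b / (a * b - 1)) with hc
  have hcpos : 0 < c := by
    have hceq : c = a * (a * b + 2 * b - 1 - 2 * α * b) / (2 * α * (a * b - 1)) := by
      rw [hc]; field_simp; ring
    rw [hceq]
    apply div_pos (mul_pos ha hnum) (by positivity)
  obtain ⟨n, hn⟩ := pow_unbounded_of_one_lt (1 / c) hP
  refine ⟨n + 1, le_add_self, ?_⟩
  have hsub : n + 1 - 1 = n := rfl
  rw [hsub]
  have hkey : 1 < c * (a * b) ^ n := by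
    have := (div_lt_iff₀ hcpos).mp hn
    linarith [this]
  have hnonneg : 0 ≤ (1 - 1 / α) * (a * b / (a * b - 1)) := by
    apply mul_nonneg
    · have : 1 / α ≤ 1 := by
        rw [div_le_one hα0]; exact hα1
      linarith
    · positivity
  have heq : a ^ (n + 1) * b ^ n / (2 * α) -
      (1 - 1 / α) * ((a ^ (n + 1) * b ^ (n + 1) - a * b) / (a * b - 1))
      = c * (a * b) ^ n + (1 - 1 / α) * (a * b / (a * b - 1)) := by
    rw [hc]; field_simp; ring
  rw [heq]
  exact lt_of_lt_of_le hkey (le_add_of_nonneg_right hnonneg)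
end

section
/- The averaged local solution is feasible: under the hypotheses below, for every resource i ∈ I it holds that Σ_{j∈V_i} a_{ij} · x̃_j ≤ 1, where x̃_j = (β_j / |V^j|) · Σ_{u∈V^j} x^u_j and β_j = min_{i∈I_j} n_i / N_i. -/
/-- The averaged local solution is feasible: for every resource `i`,
`∑ j ∈ Vi i, a i j * xt j ≤ 1`, where `xt j = (β j / |Vn j|) * ∑ u ∈ Vn j, xu u j`
and `β j = min_{i ∈ Iv j} n i / N i`. -/
theorem averaged_local_solution_feasible {V I K : Type*} [Fintype V] [Fintype I] [Fintype K]
    [DecidableEq V]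
    (a : I → V → ℝ) (c : K → V → ℝ)
    (ha : ∀ i v, 0 ≤ a i v) (hc : ∀ k v, 0 ≤ c k v)
    (Vi : I → Finset V) (hVi : ∀ i v, v ∈ Vi i ↔ 0 < a i v)
    (Vk : K → Finset V) (hVk : ∀ k v, v ∈ Vk k ↔ 0 < c k v)
    (Iv : V → Finset I) (hIv : ∀ v i, i ∈ Iv v ↔ 0 < a i v)
    (hVine : ∀ i, (Vi i).Nonempty) (hVkne : ∀ k, (Vk k).Nonempty)
    (hIvne : ∀ v, (Iv v).Nonempty)
    (Vn : V → Finset V) (hself : ∀ u, u ∈ Vn u) (hsym : ∀ u j, u ∈ Vn j ↔ j ∈ Vn u)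
    (Ui : I → Finset V) (hUi : ∀ i, Ui i = (Vi i).biUnion Vn)
    (N : I → ℕ) (hN : ∀ i, N i = (Ui i).card)
    (n : I → ℕ) (hn : ∀ i, n i = (Vi i).inf' (hVine i) (fun j => (Vn j).card))
    (β : V → ℝ) (hβ : ∀ j, β j = (Iv j).inf' (hIvne j) (fun i => (n i : ℝ) / (N i : ℝ)))
    (xu : V → V → ℝ) (hxu0 : ∀ u v, 0 ≤ xu u v)
    (hxufeas : ∀ u i, (Vi i ∩ Vn u).Nonempty → ∑ v ∈ Vi i ∩ Vn u, a i v * xu u v ≤ 1)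
    (xt : V → ℝ)
    (hxt : ∀ j, xt j = β j / ((Vn j).card : ℝ) * ∑ u ∈ Vn j, xu u j) :
    ∀ i : I, ∑ j ∈ Vi i, a i j * xt j ≤ 1 := by

  intro i
  have hNpos : (0:ℝ) < (N i : ℝ) := by
    have : (hVine i).choose ∈ Ui i := by
      rw [hUi]
      exact Finset.mem_biUnion.2 ⟨_, (hVine i).choose_spec, hself _⟩
    have : 0 < N i := by rw [hN]; exact Finset.card_pos.2 ⟨_, this⟩
    exact_mod_cast this
  have key : ∀ j ∈ Vi i, a i j * xt j ≤ (N i : ℝ)⁻¹ * ∑ u ∈ Vn j, a i j * xu u j := by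
    intro j hj
    have haij := (hVi i j).1 hj
    have hcard : (0:ℝ) < ((Vn j).card : ℝ) := by
      exact_mod_cast Finset.card_pos.2 ⟨j, hself j⟩
    have hnle : (n i : ℝ) ≤ ((Vn j).card : ℝ) := by
      have := hn i ▸ Finset.inf'_le (fun j => (Vn j).card) hj
      exact_mod_cast this
    have hβle : β j ≤ (n i : ℝ) / (N i : ℝ) := by
      rw [hβ]
      exact Finset.inf'_le _ ((hIv j i).2 haij)
    have hcoef : β j / ((Vn j).card : ℝ) ≤ (N i:ℝ)⁻¹ := by
      rw [div_le_iff₀ hcard, inv_mul_eq_div, le_div_iff₀ hNpos]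
      have h1 : β j * (N i : ℝ) ≤ (n i : ℝ) := by
        rw [le_div_iff₀ hNpos] at hβle; exact hβle
      linarith
    have hT : 0 ≤ ∑ u ∈ Vn j, a i j * xu u j :=
      Finset.sum_nonneg fun u _ => mul_nonneg (ha i j) (hxu0 u j)
    calc a i j * xt j = (β j / ((Vn j).card : ℝ)) * ∑ u ∈ Vn j, a i j * xu u j := by
          rw [hxt, Finset.mul_sum, Finset.mul_sum, Finset.mul_sum]
          exact Finset.sum_congr rfl fun u _ => by ring
      _ ≤ (N i:ℝ)⁻¹ * ∑ u ∈ Vn j, a i j * xu u j :=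
          mul_le_mul_of_nonneg_right hcoef hT
  have hswap : ∑ j ∈ Vi i, ∑ u ∈ Vn j, a i j * xu u j
      = ∑ u ∈ Ui i, ∑ j ∈ Vi i ∩ Vn u, a i j * xu u j := by
    have h1 : ∀ j ∈ Vi i, ∑ u ∈ Vn j, a i j * xu u j
        = ∑ u ∈ Ui i, if u ∈ Vn j then a i j * xu u j else 0 := by
      intro j hj
      rw [Finset.sum_ite_mem]
      congr 1
      refine (Finset.inter_eq_right.2 fun u hu => ?_).symm
      rw [hUi]
      exact Finset.mem_biUnion.2 ⟨j, hj, hu⟩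
    rw [Finset.sum_congr rfl h1, Finset.sum_comm]
    refine Finset.sum_congr rfl fun u _ => ?_
    have : ∀ j, (u ∈ Vn j) = (j ∈ Vn u) := fun j => propext (hsym u j)
    simp_rw [this]
    rw [Finset.sum_ite_mem]
  have hinner : ∀ u ∈ Ui i, ∑ j ∈ Vi i ∩ Vn u, a i j * xu u j ≤ 1 := by
    intro u _
    rcases (Vi i ∩ Vn u).eq_empty_or_nonempty with h | h
    · rw [h, Finset.sum_empty]; norm_num
    · exact hxufeas u i h
  calc ∑ j ∈ Vi i, a i j * xt j
      ≤ ∑ j ∈ Vi i, (N i:ℝ)⁻¹ * ∑ u ∈ Vn j, a i j * xu u j := Finset.sum_le_sum key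
    _ = (N i:ℝ)⁻¹ * ∑ j ∈ Vi i, ∑ u ∈ Vn j, a i j * xu u j := (Finset.mul_sum _ _ _).symm
    _ = (N i:ℝ)⁻¹ * ∑ u ∈ Ui i, ∑ j ∈ Vi i ∩ Vn u, a i j * xu u j := by rw [hswap]
    _ ≤ (N i:ℝ)⁻¹ * ∑ u ∈ Ui i, 1 :=
        mul_le_mul_of_nonneg_left (Finset.sum_le_sum hinner) (inv_nonneg.2 hNpos.le)
    _ = 1 := by
        rw [Finset.sum_const, nsmul_eq_mul, mul_one, ← hN]
        field_simp
end

section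
/- The averaged local solution preserves a fraction of the benefit: under the hypotheses below, for every beneficiary party k ∈ K it holds that Σ_{j∈V_k} c_{kj} · x̃_j ≥ β · (m_k / M_k) · ω*, where β = min_{j∈V} β_j, m_k = |∩_{j∈V_k} V^j| and M_k = max_{j∈V_k} |V^j|. -/
/-- The averaged local solution preserves a fraction of the benefit: for every
beneficiary party `k`, `∑ j ∈ Vk k, c k j * xt j ≥ β * (m k / M k) * ω*`, where
`β = min_j β j`, `m k = |∩_{j ∈ Vk k} Vn j|` and `M k = max_{j ∈ Vk k} |Vn j|`. -/
theorem averaged_local_solution_benefit {V I K : Type*} [Fintype V] [Fintype I] [Fintype K]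
    [Nonempty V] [DecidableEq V]
    (a : I → V → ℝ) (c : K → V → ℝ)
    (ha : ∀ i v, 0 ≤ a i v) (hc : ∀ k v, 0 ≤ c k v)
    (Vi : I → Finset V) (hVi : ∀ i v, v ∈ Vi i ↔ 0 < a i v)
    (Vk : K → Finset V) (hVk : ∀ k v, v ∈ Vk k ↔ 0 < c k v)
    (Iv : V → Finset I) (hIv : ∀ v i, i ∈ Iv v ↔ 0 < a i v)
    (hVine : ∀ i, (Vi i).Nonempty) (hVkne : ∀ k, (Vk k).Nonempty)
    (hIvne : ∀ v, (Iv v).Nonempty)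
    (Vn : V → Finset V) (hself : ∀ u, u ∈ Vn u) (hsym : ∀ u j, u ∈ Vn j ↔ j ∈ Vn u)
    (Ui : I → Finset V) (hUi : ∀ i, Ui i = (Vi i).biUnion Vn)
    (N : I → ℕ) (hN : ∀ i, N i = (Ui i).card)
    (n : I → ℕ) (hn : ∀ i, n i = (Vi i).inf' (hVine i) (fun j => (Vn j).card))
    (β : V → ℝ) (hβ : ∀ j, β j = (Iv j).inf' (hIvne j) (fun i => (n i : ℝ) / (N i : ℝ)))
    (βmin : ℝ) (hβmin : βmin = Finset.univ.inf' Finset.univ_nonempty β)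
    (Sk : K → Finset V) (hSk : ∀ k v, v ∈ Sk k ↔ ∀ j ∈ Vk k, v ∈ Vn j)
    (m : K → ℕ) (hm : ∀ k, m k = (Sk k).card)
    (M : K → ℕ) (hM : ∀ k, M k = (Vk k).sup' (hVkne k) (fun j => (Vn j).card))
    (ω : ℝ) (hω : 0 ≤ ω)
    (xu : V → V → ℝ) (hxu0 : ∀ u v, 0 ≤ xu u v)
    (hxubenefit : ∀ u k, Vk k ⊆ Vn u → ω ≤ ∑ v ∈ Vk k, c k v * xu u v)
    (xt : V → ℝ)
    (hxt : ∀ j, xt j = β j / ((Vn j).card : ℝ) * ∑ u ∈ Vn j, xu u j) :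
    ∀ k : K, βmin * ((m k : ℝ) / (M k : ℝ)) * ω ≤ ∑ j ∈ Vk k, c k j * xt j := by
  intro k
  have hβ0 : ∀ j, 0 ≤ β j := by
    intro j
    rw [hβ]
    apply Finset.le_inf'
    intro i _
    positivity
  have hβmin0 : 0 ≤ βmin := by
    rw [hβmin]
    apply Finset.le_inf'
    intro j _
    exact hβ0 j
  have hβminle : ∀ j, βmin ≤ β j := by
    intro j
    rw [hβmin]
    exact Finset.inf'_le _ (Finset.mem_univ j)
  have hVnpos : ∀ j, 0 < (Vn j).card := fun j => Finset.card_pos.mpr ⟨j, hself j⟩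
  have hMle : ∀ j ∈ Vk k, (Vn j).card ≤ M k := by
    intro j hj; rw [hM]; exact Finset.le_sup' (fun j => (Vn j).card) hj
  have hMpos : 0 < M k := by
    obtain ⟨j, hj⟩ := hVkne k
    exact lt_of_lt_of_le (hVnpos j) (hMle j hj)
  have hSsub : ∀ j ∈ Vk k, Sk k ⊆ Vn j := by
    intro j hj u hu
    exact (hSk k u).mp hu j hj
  calc βmin * ((m k : ℝ) / (M k : ℝ)) * ω
      = ∑ _u ∈ Sk k, βmin / (M k : ℝ) * ω := by
        rw [Finset.sum_const, hm, nsmul_eq_mul]; ring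
    _ ≤ ∑ u ∈ Sk k, βmin / (M k : ℝ) * ∑ j ∈ Vk k, c k j * xu u j := by
        apply Finset.sum_le_sum
        intro u hu
        apply mul_le_mul_of_nonneg_left _ (by positivity)
        apply hxubenefit
        intro j hj
        exact (hsym u j).mp ((hSk k u).mp hu j hj)
    _ = ∑ j ∈ Vk k, ∑ u ∈ Sk k, c k j * (βmin / (M k : ℝ)) * xu u j := by
        rw [Finset.sum_comm]
        apply Finset.sum_congr rfl
        intro u _
        rw [Finset.mul_sum]
        apply Finset.sum_congr rfl
        intro j _
        ring
    _ ≤ ∑ j ∈ Vk k, ∑ u ∈ Sk k, c k j * (β j / ((Vn j).card : ℝ)) * xu u j := by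
        apply Finset.sum_le_sum
        intro j hj
        apply Finset.sum_le_sum
        intro u _
        apply mul_le_mul_of_nonneg_right _ (hxu0 u j)
        apply mul_le_mul_of_nonneg_left _ (hc k j)
        exact div_le_div₀ (hβ0 j) (hβminle j) (by exact_mod_cast hVnpos j)
          (by exact_mod_cast hMle j hj)
    _ ≤ ∑ j ∈ Vk k, ∑ u ∈ Vn j, c k j * (β j / ((Vn j).card : ℝ)) * xu u j := by
        apply Finset.sum_le_sum
        intro j hj
        apply Finset.sum_le_sum_of_subset_of_nonneg (hSsub j hj)
        intro u _ _
        exact mul_nonneg (mul_nonneg (hc k j)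
          (div_nonneg (hβ0 j) (Nat.cast_nonneg _))) (hxu0 u j)
    _ = ∑ j ∈ Vk k, c k j * xt j := by
        apply Finset.sum_congr rfl
        intro j _
        rw [hxt, Finset.mul_sum, Finset.mul_sum]
        apply Finset.sum_congr rfl
        intro u _
        ring
end

section
/- Combined approximation guarantee for the averaged local solution: under the hypotheses below, assuming additionally m_k ≥ 1 for all k ∈ K, it holds that ω* ≤ (max_{k∈K} M_k/m_k) · (max_{i∈I} N_i/n_i) · min_{k∈K} Σ_{j∈V_k} c_{kj} x̃_j. -/
/-- Combined approximation guarantee for the averaged local solution: assuming `m k ≥ 1`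
for all `k`, `ω* ≤ (max_k M k / m k) * (max_i N i / n i) * min_k ∑ j ∈ Vk k, c k j * xt j`. -/
theorem averaged_local_solution_ratio {V I K : Type*} [Fintype V] [Fintype I] [Fintype K]
    [Nonempty V] [Nonempty I] [Nonempty K] [DecidableEq V]
    (a : I → V → ℝ) (c : K → V → ℝ)
    (ha : ∀ i v, 0 ≤ a i v) (hc : ∀ k v, 0 ≤ c k v)
    (Vi : I → Finset V) (hVi : ∀ i v, v ∈ Vi i ↔ 0 < a i v)
    (Vk : K → Finset V) (hVk : ∀ k v, v ∈ Vk k ↔ 0 < c k v)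
    (Iv : V → Finset I) (hIv : ∀ v i, i ∈ Iv v ↔ 0 < a i v)
    (hVine : ∀ i, (Vi i).Nonempty) (hVkne : ∀ k, (Vk k).Nonempty)
    (hIvne : ∀ v, (Iv v).Nonempty)
    (Vn : V → Finset V) (hself : ∀ u, u ∈ Vn u) (hsym : ∀ u j, u ∈ Vn j ↔ j ∈ Vn u)
    (Ui : I → Finset V) (hUi : ∀ i, Ui i = (Vi i).biUnion Vn)
    (N : I → ℕ) (hN : ∀ i, N i = (Ui i).card)
    (n : I → ℕ) (hn : ∀ i, n i = (Vi i).inf' (hVine i) (fun j => (Vn j).card))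
    (β : V → ℝ) (hβ : ∀ j, β j = (Iv j).inf' (hIvne j) (fun i => (n i : ℝ) / (N i : ℝ)))
    (Sk : K → Finset V) (hSk : ∀ k v, v ∈ Sk k ↔ ∀ j ∈ Vk k, v ∈ Vn j)
    (m : K → ℕ) (hm : ∀ k, m k = (Sk k).card) (hm1 : ∀ k, 1 ≤ m k)
    (M : K → ℕ) (hM : ∀ k, M k = (Vk k).sup' (hVkne k) (fun j => (Vn j).card))
    (ω : ℝ) (hω : 0 ≤ ω)
    (xu : V → V → ℝ) (hxu0 : ∀ u v, 0 ≤ xu u v)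
    (hxubenefit : ∀ u k, Vk k ⊆ Vn u → ω ≤ ∑ v ∈ Vk k, c k v * xu u v)
    (xt : V → ℝ)
    (hxt : ∀ j, xt j = β j / ((Vn j).card : ℝ) * ∑ u ∈ Vn j, xu u j) :
    ω ≤ (Finset.univ.sup' Finset.univ_nonempty (fun k : K => (M k : ℝ) / (m k : ℝ))) *
        (Finset.univ.sup' Finset.univ_nonempty (fun i : I => (N i : ℝ) / (n i : ℝ))) *
        (Finset.univ.inf' Finset.univ_nonempty
          (fun k : K => ∑ j ∈ Vk k, c k j * xt j)) := by
  classical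
  set B := (Finset.univ.sup' Finset.univ_nonempty (fun i : I => (N i : ℝ) / (n i : ℝ))) with hBdef
  set A := (Finset.univ.sup' Finset.univ_nonempty (fun k : K => (M k : ℝ) / (m k : ℝ))) with hAdef
  -- basic facts about n, N
  have hn1 : ∀ i, 1 ≤ n i := by
    intro i
    rw [hn]
    apply Finset.le_inf'
    intro j hj
    exact Finset.card_pos.mpr ⟨j, hself j⟩
  have hnN : ∀ i, n i ≤ N i := by
    intro i
    obtain ⟨j, hj, hje⟩ := Finset.exists_mem_eq_inf' (hVine i) (fun j => (Vn j).card)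
    rw [hn, hje, hN, hUi]
    exact Finset.card_le_card (Finset.subset_biUnion_of_mem Vn hj)
  have hBi : ∀ i : I, (1:ℝ) ≤ (N i : ℝ) / (n i : ℝ) := by
    intro i
    rw [one_le_div (by exact_mod_cast hn1 i)]
    exact_mod_cast hnN i
  have hBub : ∀ i : I, (N i : ℝ) / (n i : ℝ) ≤ B := by
    intro i
    rw [hBdef]
    exact Finset.le_sup' (fun i : I => (N i : ℝ) / (n i : ℝ)) (Finset.mem_univ i)
  have hB1 : (1:ℝ) ≤ B := le_trans (hBi (Classical.arbitrary I)) (hBub _)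
  have hBpos : (0:ℝ) < B := lt_of_lt_of_le one_pos hB1
  -- β bounds
  have hβlb : ∀ j, 1 / B ≤ β j := by
    intro j
    rw [hβ]
    apply Finset.le_inf'
    intro i hi
    have hNpos : (0:ℝ) < (N i : ℝ) / (n i : ℝ) := lt_of_lt_of_le one_pos (hBi i)
    calc 1 / B ≤ 1 / ((N i : ℝ) / (n i : ℝ)) :=
          one_div_le_one_div_of_le hNpos (hBub i)
      _ = (n i : ℝ) / (N i : ℝ) := one_div_div _ _
  have hβpos : ∀ j, 0 < β j := fun j =>
    lt_of_lt_of_le (by positivity) (hβlb j)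
  have hβB : ∀ j, 1 / β j ≤ B := fun j => (one_div_le (hβpos j) hBpos).mpr (hβlb j)
  have hxt0 : ∀ j, 0 ≤ xt j := by
    intro j
    rw [hxt]
    exact mul_nonneg (div_nonneg (hβpos j).le (Nat.cast_nonneg _))
      (Finset.sum_nonneg fun u _ => hxu0 u j)
  -- choose a minimizing k₀
  obtain ⟨k₀, -, hk₀⟩ := Finset.exists_mem_eq_inf' (Finset.univ_nonempty (α := K))
    (fun k : K => ∑ j ∈ Vk k, c k j * xt j)
  rw [hk₀]
  set T := ∑ j ∈ Vk k₀, c k₀ j * xt j with hTdef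
  have hT0 : 0 ≤ T := Finset.sum_nonneg fun j _ => mul_nonneg (hc k₀ j) (hxt0 j)
  have hmpos : (0:ℝ) < (m k₀ : ℝ) := by exact_mod_cast hm1 k₀
  -- the key inequality
  have key : (m k₀ : ℝ) * ω ≤ (M k₀ : ℝ) * B * T := by
    have step1 : (m k₀ : ℝ) * ω ≤ ∑ u ∈ Sk k₀, ∑ j ∈ Vk k₀, c k₀ j * xu u j := by
      have : (m k₀ : ℝ) * ω = ∑ u ∈ Sk k₀, ω := by
        rw [Finset.sum_const, hm k₀, nsmul_eq_mul]
      rw [this]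
      apply Finset.sum_le_sum
      intro u hu
      apply hxubenefit u k₀
      intro j hj
      exact (hsym u j).mp (((hSk k₀ u).mp hu) j hj)
    have step2 : ∑ u ∈ Sk k₀, ∑ j ∈ Vk k₀, c k₀ j * xu u j
        ≤ ∑ j ∈ Vk k₀, c k₀ j * ((M k₀ : ℝ) * B * xt j) := by
      rw [Finset.sum_comm]
      apply Finset.sum_le_sum
      intro j hj
      rw [← Finset.mul_sum]
      apply mul_le_mul_of_nonneg_left _ (hc k₀ j)
      -- ∑ u ∈ Sk k₀, xu u j ≤ M k₀ * B * xt j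
      have hsub : Sk k₀ ⊆ Vn j := fun u hu => ((hSk k₀ u).mp hu) j hj
      have h1 : ∑ u ∈ Sk k₀, xu u j ≤ ∑ u ∈ Vn j, xu u j :=
        Finset.sum_le_sum_of_subset_of_nonneg hsub (fun u _ _ => hxu0 u j)
      have hcardpos : (0:ℝ) < ((Vn j).card : ℝ) := by
        exact_mod_cast Finset.card_pos.mpr ⟨j, hself j⟩
      have hS : ∑ u ∈ Vn j, xu u j = xt j * (((Vn j).card : ℝ) / β j) := by
        rw [hxt j]
        field_simp [(hβpos j).ne', hcardpos.ne']
      have hcardM : ((Vn j).card : ℝ) ≤ (M k₀ : ℝ) := by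
        rw [hM]
        exact_mod_cast Finset.le_sup' (fun j => (Vn j).card) hj
      have hM0 : (0:ℝ) ≤ (M k₀ : ℝ) := le_trans hcardpos.le hcardM
      have h2 : ((Vn j).card : ℝ) / β j ≤ (M k₀ : ℝ) * B := by
        rw [div_eq_mul_one_div]
        exact mul_le_mul hcardM (hβB j) (one_div_pos.mpr (hβpos j)).le hM0
      calc ∑ u ∈ Sk k₀, xu u j ≤ ∑ u ∈ Vn j, xu u j := h1
        _ = xt j * (((Vn j).card : ℝ) / β j) := hS
        _ ≤ xt j * ((M k₀ : ℝ) * B) := mul_le_mul_of_nonneg_left h2 (hxt0 j)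
        _ = (M k₀ : ℝ) * B * xt j := by ring
    have step3 : ∑ j ∈ Vk k₀, c k₀ j * ((M k₀ : ℝ) * B * xt j) = (M k₀ : ℝ) * B * T := by
      rw [hTdef, Finset.mul_sum]
      exact Finset.sum_congr rfl fun j _ => by ring
    linarith
  -- divide by m k₀ and bound M/m by A
  have step4 : ω ≤ ((M k₀ : ℝ) / (m k₀ : ℝ)) * B * T := by
    rw [div_mul_eq_mul_div, div_mul_eq_mul_div, le_div_iff₀ hmpos]
    calc ω * (m k₀ : ℝ) = (m k₀ : ℝ) * ω := by ring
      _ ≤ (M k₀ : ℝ) * B * T := key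
  have hMA : (M k₀ : ℝ) / (m k₀ : ℝ) ≤ A := by
    rw [hAdef]
    exact Finset.le_sup' (fun k : K => (M k : ℝ) / (m k : ℝ)) (Finset.mem_univ k₀)
  calc ω ≤ ((M k₀ : ℝ) / (m k₀ : ℝ)) * B * T := step4
    _ ≤ A * B * T := by
        rw [mul_assoc, mul_assoc]
        exact mul_le_mul_of_nonneg_right hMA (mul_nonneg hBpos.le hT0)
end

section
/- Local approximation with ratio γ(R−1)·γ(R): under the hypotheses below, the averaged solution x̃ is feasible (Σ_{j∈V_i} a_{ij} x̃_j ≤ 1 for all i ∈ I) and satisfies min_{k∈K} Σ_{j∈V_k} c_{kj} x̃_j ≥ ω* / (γ(R−1) · γ(R)). -/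
/-- Local approximation with ratio `γ(R-1) * γ(R)`: the averaged solution `xt` is feasible and
`min_k ∑ j ∈ Vk k, c k j * xt j ≥ ω* / (γ(R-1) * γ(R))`. -/
theorem local_approximation_ratio {V I K : Type*} [Fintype V] [Fintype I] [Fintype K]
    [Nonempty V] [Nonempty K] [DecidableEq V]
    (a : I → V → ℝ) (c : K → V → ℝ)
    (ha : ∀ i v, 0 ≤ a i v) (hc : ∀ k v, 0 ≤ c k v)
    (Vi : I → Finset V) (hVi : ∀ i v, v ∈ Vi i ↔ 0 < a i v)
    (Vk : K → Finset V) (hVk : ∀ k v, v ∈ Vk k ↔ 0 < c k v)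
    (Iv : V → Finset I) (hIv : ∀ v i, i ∈ Iv v ↔ 0 < a i v)
    (hVine : ∀ i, (Vi i).Nonempty) (hVkne : ∀ k, (Vk k).Nonempty)
    (hIvne : ∀ v, (Iv v).Nonempty)
    (G : SimpleGraph V) (hconn : G.Connected)
    (hcliqueI : ∀ i : I, ∀ u ∈ Vi i, ∀ v ∈ Vi i, u ≠ v → G.Adj u v)
    (hcliqueK : ∀ k : K, ∀ u ∈ Vk k, ∀ v ∈ Vk k, u ≠ v → G.Adj u v)
    (B : V → ℕ → Finset V) (hB : ∀ v r u, u ∈ B v r ↔ G.dist u v ≤ r)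
    (γ : ℕ → ℝ)
    (hγ : ∀ r, γ r = Finset.univ.sup' Finset.univ_nonempty
      (fun v => ((B v (r + 1)).card : ℝ) / ((B v r).card : ℝ)))
    (R : ℕ) (hR : 1 ≤ R)
    (Vn : V → Finset V) (hVn : ∀ u, Vn u = B u R)
    (Ui : I → Finset V) (hUi : ∀ i, Ui i = (Vi i).biUnion Vn)
    (N : I → ℕ) (hN : ∀ i, N i = (Ui i).card)
    (n : I → ℕ) (hn : ∀ i, n i = (Vi i).inf' (hVine i) (fun j => (Vn j).card))
    (β : V → ℝ) (hβ : ∀ j, β j = (Iv j).inf' (hIvne j) (fun i => (n i : ℝ) / (N i : ℝ)))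
    (ω : ℝ) (hω : 0 ≤ ω)
    (xu : V → V → ℝ) (hxu0 : ∀ u v, 0 ≤ xu u v)
    (hxufeas : ∀ u i, (Vi i ∩ Vn u).Nonempty → ∑ v ∈ Vi i ∩ Vn u, a i v * xu u v ≤ 1)
    (hxubenefit : ∀ u k, Vk k ⊆ Vn u → ω ≤ ∑ v ∈ Vk k, c k v * xu u v)
    (xt : V → ℝ)
    (hxt : ∀ j, xt j = β j / ((Vn j).card : ℝ) * ∑ u ∈ Vn j, xu u j) :
    (∀ i : I, ∑ j ∈ Vi i, a i j * xt j ≤ 1) ∧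
      ω / (γ (R - 1) * γ R) ≤
        Finset.univ.inf' Finset.univ_nonempty
          (fun k : K => ∑ j ∈ Vk k, c k j * xt j) := by
  -- basic ball facts
  have hBself : ∀ v r, v ∈ B v r := by
    intro v r; rw [hB, SimpleGraph.dist_self]; exact Nat.zero_le r
  have hBmono : ∀ v r s, r ≤ s → B v r ⊆ B v s := by
    intro v r s hrs u hu; rw [hB] at hu ⊢; omega
  have hBcardpos : ∀ v r, (0:ℝ) < ((B v r).card : ℝ) := by
    intro v r
    exact_mod_cast Finset.card_pos.mpr ⟨v, hBself v r⟩
  have hγball : ∀ r v, ((B v (r+1)).card : ℝ) ≤ γ r * ((B v r).card : ℝ) := by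
    intro r v
    have h := Finset.le_sup' (f := fun v => ((B v (r + 1)).card : ℝ) / ((B v r).card : ℝ))
      (Finset.mem_univ v)
    rw [← hγ r, div_le_iff₀ (hBcardpos v r)] at h
    exact h
  have hγge1 : ∀ r, (1:ℝ) ≤ γ r := by
    intro r
    obtain ⟨v⟩ := (inferInstance : Nonempty V)
    have h := Finset.le_sup' (f := fun v => ((B v (r + 1)).card : ℝ) / ((B v r).card : ℝ))
      (Finset.mem_univ v)
    rw [← hγ r] at h
    refine le_trans ?_ h
    rw [le_div_iff₀ (hBcardpos v r), one_mul]
    exact_mod_cast Finset.card_le_card (hBmono v r (r+1) (by omega))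
  have hγpos : ∀ r, (0:ℝ) < γ r := fun r => lt_of_lt_of_le one_pos (hγge1 r)
  have htri : ∀ u v w : V, G.dist u w ≤ G.dist u v + G.dist v w :=
    fun u v w => hconn.dist_triangle
  have hVnmem : ∀ j u, u ∈ Vn j ↔ G.dist u j ≤ R := by
    intro j u; rw [hVn j, hB]
  have hVnsymm : ∀ u j, u ∈ Vn j ↔ j ∈ Vn u := by
    intro u j; rw [hVnmem, hVnmem, SimpleGraph.dist_comm]
  have hselfVn : ∀ j, j ∈ Vn j := by
    intro j; rw [hVnmem, SimpleGraph.dist_self]; exact Nat.zero_le R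
  have hVncardpos : ∀ j, (0:ℝ) < ((Vn j).card : ℝ) := by
    intro j; rw [hVn]; exact hBcardpos j R
  have hNpos : ∀ i, (0:ℝ) < (N i : ℝ) := by
    intro i
    obtain ⟨j, hj⟩ := hVine i
    have : j ∈ Ui i := by
      rw [hUi]; exact Finset.mem_biUnion.mpr ⟨j, hj, hselfVn j⟩
    rw [hN]
    exact_mod_cast Finset.card_pos.mpr ⟨j, this⟩
  -- distance within cliques
  have hdistI : ∀ i, ∀ j ∈ Vi i, ∀ j' ∈ Vi i, G.dist j j' ≤ 1 := by
    intro i j hj j' hj'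
    by_cases h : j = j'
    · subst h; rw [SimpleGraph.dist_self]; exact Nat.zero_le 1
    · exact le_of_eq (SimpleGraph.dist_eq_one_iff_adj.mpr (hcliqueI i j hj j' hj' h))
  have hdistK : ∀ k, ∀ j ∈ Vk k, ∀ j' ∈ Vk k, G.dist j j' ≤ 1 := by
    intro k j hj j' hj'
    by_cases h : j = j'
    · subst h; rw [SimpleGraph.dist_self]; exact Nat.zero_le 1
    · exact le_of_eq (SimpleGraph.dist_eq_one_iff_adj.mpr (hcliqueK k j hj j' hj' h))
  -- lower bound on β
  have hβlb : ∀ j, 1 / γ R ≤ β j := by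
    intro j
    rw [hβ]
    apply Finset.le_inf'
    intro i _
    obtain ⟨j0, hj0, hj0eq⟩ := Finset.exists_mem_eq_inf' (hVine i) (fun j => (Vn j).card)
    have hNle : (N i : ℝ) ≤ γ R * (n i : ℝ) := by
      have hsub : Ui i ⊆ B j0 (R + 1) := by
        intro u hu
        rw [hUi] at hu
        obtain ⟨j', hj', hu'⟩ := Finset.mem_biUnion.mp hu
        rw [hVnmem] at hu'
        rw [hB]
        calc G.dist u j0 ≤ G.dist u j' + G.dist j' j0 := htri u j' j0
          _ ≤ R + 1 := add_le_add hu' (hdistI i j' hj' j0 hj0)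
      have h1 : ((Ui i).card : ℝ) ≤ ((B j0 (R+1)).card : ℝ) := by
        exact_mod_cast Finset.card_le_card hsub
      have h2 : ((B j0 (R+1)).card : ℝ) ≤ γ R * ((B j0 R).card : ℝ) := hγball R j0
      have h3 : ((B j0 R).card : ℝ) = (n i : ℝ) := by
        rw [hn, hj0eq, hVn]
      rw [hN]
      calc ((Ui i).card : ℝ) ≤ γ R * ((B j0 R).card : ℝ) := le_trans h1 h2
        _ = γ R * (n i : ℝ) := by rw [h3]
    rw [div_le_div_iff₀ (hγpos R) (hNpos i), one_mul]
    linarith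
  constructor
  · -- feasibility
    intro i
    have hβub : ∀ j ∈ Vi i, β j / ((Vn j).card : ℝ) ≤ 1 / (N i : ℝ) := by
      intro j hj
      have hiIv : i ∈ Iv j := (hIv j i).mpr ((hVi i j).mp hj)
      have h1 : β j ≤ (n i : ℝ) / (N i : ℝ) := by
        rw [hβ]
        exact Finset.inf'_le _ hiIv
      have h2 : (n i : ℝ) ≤ ((Vn j).card : ℝ) := by
        have h2' : (Vi i).inf' (hVine i) (fun j => (Vn j).card) ≤ (Vn j).card :=
          Finset.inf'_le _ hj
        rw [← hn i] at h2'
        exact_mod_cast h2'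
      have hNne : (N i : ℝ) ≠ 0 := ne_of_gt (hNpos i)
      rw [div_le_div_iff₀ (hVncardpos j) (hNpos i), one_mul]
      calc β j * (N i : ℝ) ≤ ((n i : ℝ) / (N i : ℝ)) * (N i : ℝ) := by
            apply mul_le_mul_of_nonneg_right h1 (le_of_lt (hNpos i))
        _ = (n i : ℝ) := by field_simp
        _ ≤ ((Vn j).card : ℝ) := h2
    calc ∑ j ∈ Vi i, a i j * xt j
        ≤ ∑ j ∈ Vi i, (1 / (N i : ℝ)) * (a i j * ∑ u ∈ Vn j, xu u j) := by
          apply Finset.sum_le_sum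
          intro j hj
          rw [hxt j]
          have hS0 : 0 ≤ ∑ u ∈ Vn j, xu u j := Finset.sum_nonneg (fun u _ => hxu0 u j)
          have e1 : a i j * (β j / ((Vn j).card : ℝ) * ∑ u ∈ Vn j, xu u j)
              = (β j / ((Vn j).card : ℝ)) * (a i j * ∑ u ∈ Vn j, xu u j) := by ring
          rw [e1]
          exact mul_le_mul_of_nonneg_right (hβub j hj) (mul_nonneg (ha i j) hS0)
      _ = (1 / (N i : ℝ)) * ∑ j ∈ Vi i, ∑ u ∈ Vn j, a i j * xu u j := by
          rw [Finset.mul_sum]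
          exact Finset.sum_congr rfl fun j _ => by rw [Finset.mul_sum]
      _ = (1 / (N i : ℝ)) * ∑ u ∈ Ui i, ∑ j ∈ Vi i ∩ Vn u, a i j * xu u j := by
          congr 1
          refine Finset.sum_comm' ?_
          intro j u
          simp only [hUi, Finset.mem_biUnion, Finset.mem_inter]
          constructor
          · rintro ⟨hj, hu⟩
            exact ⟨⟨hj, (hVnsymm u j).mp hu⟩, ⟨j, hj, hu⟩⟩
          · rintro ⟨⟨hj, hju⟩, -⟩
            exact ⟨hj, (hVnsymm j u).mp hju⟩
      _ ≤ (1 / (N i : ℝ)) * ∑ u ∈ Ui i, 1 := by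
          apply mul_le_mul_of_nonneg_left _ (by positivity)
          apply Finset.sum_le_sum
          intro u _
          rcases Finset.eq_empty_or_nonempty (Vi i ∩ Vn u) with h | h
          · rw [h]; simp
          · exact hxufeas u i h
      _ = 1 := by
          rw [Finset.sum_const, nsmul_eq_mul, mul_one, ← hN, one_div,
            inv_mul_cancel₀ (ne_of_gt (hNpos i))]
  · -- benefit
    apply Finset.le_inf'
    intro k _
    obtain ⟨js, hjs, hjsmax⟩ := (Vk k).exists_max_image (fun j => (B j (R-1)).card) (hVkne k)
    set S := B js (R-1) with hS
    have hScardpos : (0:ℝ) < (S.card : ℝ) := hBcardpos js (R-1)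
    have hSsubVn : ∀ j ∈ Vk k, S ⊆ Vn j := by
      intro j hj u hu
      rw [hB] at hu
      rw [hVnmem]
      calc G.dist u j ≤ G.dist u js + G.dist js j := htri u js j
        _ ≤ (R - 1) + 1 := add_le_add hu (hdistK k js hjs j hj)
        _ = R := Nat.sub_add_cancel hR
    have hVkVn : ∀ u ∈ S, Vk k ⊆ Vn u := by
      intro u hu j hj
      exact (hVnsymm u j).mp (hSsubVn j hj hu)
    have hVncardle : ∀ j ∈ Vk k, ((Vn j).card : ℝ) ≤ γ (R-1) * (S.card : ℝ) := by
      intro j hj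
      have h1 : ((Vn j).card : ℝ) = ((B j ((R-1)+1)).card : ℝ) := by
        rw [hVn, Nat.sub_add_cancel hR]
      have h2 := hγball (R-1) j
      have h3 : ((B j (R-1)).card : ℝ) ≤ (S.card : ℝ) := by
        exact_mod_cast hjsmax j hj
      rw [h1]
      calc ((B j ((R-1)+1)).card : ℝ) ≤ γ (R-1) * ((B j (R-1)).card : ℝ) := h2
        _ ≤ γ (R-1) * (S.card : ℝ) :=
          mul_le_mul_of_nonneg_left h3 (le_of_lt (hγpos (R-1)))
    set C : ℝ := γ (R-1) * γ R * (S.card : ℝ) with hC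
    have hCpos : 0 < C := by
      rw [hC]; exact mul_pos (mul_pos (hγpos _) (hγpos _)) hScardpos
    have hγRne : γ R ≠ 0 := ne_of_gt (hγpos R)
    have hγR1ne : γ (R-1) ≠ 0 := ne_of_gt (hγpos (R-1))
    have hSne : ((S.card : ℝ)) ≠ 0 := ne_of_gt hScardpos
    have hstep1 : ∀ j ∈ Vk k, (1 / C) * ∑ u ∈ S, xu u j ≤ xt j := by
      intro j hj
      rw [hxt j]
      have hsumle : ∑ u ∈ S, xu u j ≤ ∑ u ∈ Vn j, xu u j :=
        Finset.sum_le_sum_of_subset_of_nonneg (hSsubVn j hj) (fun u _ _ => hxu0 u j)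
      have hfac : 1 / C ≤ β j / ((Vn j).card : ℝ) := by
        rw [div_le_div_iff₀ hCpos (hVncardpos j), one_mul]
        calc ((Vn j).card : ℝ) ≤ γ (R-1) * (S.card : ℝ) := hVncardle j hj
          _ = (1 / γ R) * C := by
              rw [hC]; field_simp
          _ ≤ β j * C := mul_le_mul_of_nonneg_right (hβlb j) (le_of_lt hCpos)
      exact mul_le_mul hfac hsumle (Finset.sum_nonneg (fun u _ => hxu0 u j))
        (le_trans (by positivity) hfac)
    calc ω / (γ (R-1) * γ R) = (1 / C) * ∑ u ∈ S, ω := by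
          rw [Finset.sum_const, nsmul_eq_mul, hC]
          field_simp
      _ ≤ (1 / C) * ∑ u ∈ S, ∑ j ∈ Vk k, c k j * xu u j := by
          apply mul_le_mul_of_nonneg_left _ (by positivity)
          exact Finset.sum_le_sum (fun u hu => hxubenefit u k (hVkVn u hu))
      _ = ∑ j ∈ Vk k, (1 / C) * ∑ u ∈ S, c k j * xu u j := by
          rw [Finset.sum_comm, ← Finset.mul_sum]
      _ ≤ ∑ j ∈ Vk k, c k j * xt j := by
          apply Finset.sum_le_sum
          intro j hj
          calc (1 / C) * ∑ u ∈ S, c k j * xu u j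
              = c k j * ((1 / C) * ∑ u ∈ S, xu u j) := by
                rw [← Finset.mul_sum]; ring
            _ ≤ c k j * xt j :=
                mul_le_mul_of_nonneg_left (hstep1 j hj) (hc k j)
end
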